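/- (Björck–Saffari, Case 1.) Let N be a positive integer, and let n > 1 be such that n² is the largest square dividing N (i.e. n² ∣ N and for every d with d² ∣ N one has d ≤ n); set m := N/n. Assume n is even or m is odd. Let c : Fin n → ℂ satisfy ‖c h‖ = 1 for all h, let τ be a permutation of Fin n, and let ρ : ℂ be a primitive m-th root of unity. Define f : ZMod N → ℂ by writing each k ∈ ZMod N as k.val = n·r + h with 0 ≤ h < n and 0 ≤ r < m, and setting f k = c h · ρ^(r·(τ h).val + n·(r·(r-1)/2)). Then f is biunimodular: ‖f k‖ = 1 for all k, and ‖f̂ c'‖ = 1 for all c' ∈ ZMod N. -/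

import Mathlib

/-!
Write `k = n r + h` with `h < n`, `r < m`, and put `m = n m'` (so `m' = N / n²`). Then
`f̂ c' = N^{-1/2} Σ_h c_h e(h c' / N) G(θ_h)`, where `G(θ) = Σ_{r<m} ρ^{n·C(r,2)} θ^r` is a
chirp sum and `θ_h = ζ^{c'} ρ^{τ h}` with `ζ = e^{2πi/m}`. The case hypothesis `Even n ∨ Odd m`
makes the chirp `m`-periodic, and the autocorrelation of a periodic chirp gives
`|G(θ)|² = m Σ_{j<n} w^j` with `w = ρ^{n·C(m',2)} θ^{m'}` an `n`-th root of unity, so `|G(θ)|²`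
is `N` if `w = 1` and `0` otherwise. For `θ = θ_h` one has `w = z·η^{τ h}` with
`z = ρ^{n·C(m',2)} ζ^{c' m'}` and `η = ρ^{m'}` a primitive `n`-th root of unity; as `τ` is a
bijection, `w = 1` for exactly one `h`, and the single surviving term has modulus one.
-/

open Complex

noncomputable def dft1 (N : ℕ) [NeZero N] (f : ZMod N → ℂ) : ZMod N → ℂ :=
  fun c => (1 / Real.sqrt N : ℂ) * ∑ k : ZMod N,
    Complex.exp (2 * Real.pi * Complex.I * (k.val * c.val) / N) * f k

open ComplexConjugate Finset Function

theorem Nat.add_choose_two (r s : ℕ) : (r + s).choose 2 = r.choose 2 + s.choose 2 + r * s := by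
  induction s with
  | zero => simp
  | succ s ih =>
    rw [← add_assoc, Nat.choose_succ_succ', ih, Nat.choose_succ_succ' s]
    simp only [Nat.choose_one_right]
    ring

theorem dvd_mul_choose_two {n m : ℕ} (h : Even n ∨ Odd m) : m ∣ n * m.choose 2 := by
  rw [Nat.choose_two_right]
  rcases h with ⟨t, rfl⟩ | ⟨u, rfl⟩
  · refine ⟨t * (m - 1), ?_⟩
    rw [← two_mul, mul_assoc, mul_left_comm, Nat.two_mul_div_two_of_even (Nat.even_mul_pred_self m)]
    ring
  · refine ⟨n * u, ?_⟩
    rw [Nat.add_sub_cancel, mul_left_comm, Nat.mul_div_cancel_left _ two_pos]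
    ring

theorem sum_range_mul_eq_sum_sum {M : Type*} [AddCommMonoid M] (n m : ℕ) (Ψ : ℕ → M) :
    ∑ i ∈ range (n * m), Ψ i = ∑ h ∈ range n, ∑ r ∈ range m, Ψ (n * r + h) := by
  induction m with
  | zero => simp
  | succ m ih =>
    simp only [Nat.mul_succ, sum_range_add, ih, sum_range_succ, sum_add_distrib]

theorem sum_range_mul_ite_dvd {M : Type*} [AddCommMonoid M] {k : ℕ} (hk : 0 < k) (n : ℕ)
    (Ψ : ℕ → M) :
    ∑ t ∈ range (k * n), (if k ∣ t then Ψ t else 0) = ∑ q ∈ range n, Ψ (k * q) := by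
  rw [sum_range_mul_eq_sum_sum, sum_eq_single_of_mem 0 (mem_range.2 hk)]
  · simp
  · intro w hw hw0
    refine sum_eq_zero fun q _ => if_neg ?_
    rw [Nat.dvd_add_right (dvd_mul_right k q)]
    exact fun h => hw0 (Nat.eq_zero_of_dvd_of_lt h (mem_range.1 hw))

theorem Function.Periodic.sum_range_add {M : Type*} [AddCancelCommMonoid M] {F : ℕ → M} {m : ℕ}
    (hF : Periodic F m) (s : ℕ) : ∑ r ∈ range m, F (r + s) = ∑ r ∈ range m, F r := by
  induction s with
  | zero => rfl
  | succ s ih =>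
    have h := (sum_range_succ' (fun r => F (r + s)) m).symm.trans
      (sum_range_succ (fun r => F (r + s)) m)
    rw [zero_add, add_comm m, hF s] at h
    simp only [← add_assoc, add_right_comm _ 1 s] at h ⊢
    rw [add_right_cancel h, ih]

theorem ZMod.sum_divMod_eq_sum_sum {M : Type*} [AddCommMonoid M] {N n m : ℕ} [NeZero N]
    (hN : N = n * m) (hn : 0 < n) (Φ : Fin n → ℕ → M) :
    ∑ k : ZMod N, Φ ⟨k.val % n, Nat.mod_lt _ hn⟩ (k.val / n) =
      ∑ h : Fin n, ∑ r ∈ range m, Φ h r := by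
  set Ψ : ℕ → M := fun i => Φ ⟨i % n, Nat.mod_lt _ hn⟩ (i / n)
  have hval : ∑ k : ZMod N, Ψ k.val = ∑ i ∈ range N, Ψ i :=
    sum_nbij' ZMod.val (↑) (fun k _ => mem_range.2 (ZMod.val_lt k)) (fun _ _ => mem_univ _)
      (fun k _ => ZMod.natCast_zmod_val k) (fun i hi => ZMod.val_cast_of_lt (mem_range.1 hi))
      (fun _ _ => rfl)
  rw [hval, hN, sum_range_mul_eq_sum_sum, ← Fin.sum_univ_eq_sum_range]
  refine sum_congr rfl fun h _ => sum_congr rfl fun r _ => ?_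
  have hmod : (n * r + h) % n = h := by rw [Nat.mul_add_mod, Nat.mod_eq_of_lt h.isLt]
  have hdiv : (n * r + h) / n = r := by rw [Nat.mul_add_div hn, Nat.div_eq_of_lt h.isLt, add_zero]
  simp only [Ψ, hmod, hdiv]

theorem geom_sum_eq_ite_of_pow_eq_one {K : Type*} [Field K] [DecidableEq K] {x : K} {m : ℕ}
    (hx : x ^ m = 1) :
    ∑ i ∈ range m, x ^ i = if x = 1 then (m : K) else 0 := by
  split_ifs with h
  · simp [h]
  · rw [geom_sum_eq h, hx, sub_self, zero_div]

theorem IsPrimitiveRoot.geom_sum_pow_pow_eq_ite {K : Type*} [Field K] {ρ : K} {m n m' : ℕ}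
    (hρ : IsPrimitiveRoot ρ m) (hmn : m = n * m') (t : ℕ) :
    ∑ s ∈ range m, ((ρ ^ n) ^ t) ^ s = if m' ∣ t then (m : K) else 0 := by
  classical
  rcases eq_or_ne m 0 with rfl | hm
  · simp
  have h1 : ((ρ ^ n) ^ t) ^ m = 1 := by
    rw [← pow_mul, ← pow_mul, show n * (t * m) = m * (n * t) by ring, pow_mul, hρ.pow_eq_one,
      one_pow]
  rw [geom_sum_eq_ite_of_pow_eq_one h1]
  exact if_congr ((hρ.pow (Nat.pos_of_ne_zero hm) hmn).pow_eq_one_iff_dvd t) rfl rfl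

theorem IsPrimitiveRoot.existsUnique_mul_pow_eq_one {K : Type*} [Field K] {η z : K} {n : ℕ}
    [NeZero n] (hη : IsPrimitiveRoot η n) (hz : z ^ n = 1) : ∃! i : Fin n, z * η ^ (i : ℕ) = 1 := by
  have hz0 : z ≠ 0 := by rintro rfl; simp [NeZero.ne n] at hz
  obtain ⟨i, hi, hηi⟩ := hη.eq_pow_of_pow_eq_one (ξ := z⁻¹) (by rw [inv_pow, hz, inv_one])
  refine ⟨⟨i, hi⟩, by simp [hηi, hz0], fun j hj => Fin.ext (hη.pow_inj j.isLt hi ?_)⟩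
  rw [hηi]
  exact eq_inv_of_mul_eq_one_right hj

theorem norm_exp_two_pi_I_mul_natCast_div (a b N : ℕ) :
    ‖exp (2 * Real.pi * I * (a * b) / N)‖ = 1 := by
  rw [show 2 * Real.pi * I * (a * b) / N = ((2 * Real.pi * (a * b) / N : ℝ) : ℂ) * I by
    push_cast; ring, norm_exp_ofReal_mul_I]

section Chirp

variable {M : Type*} [CommMonoid M] (ρ : M) (n : ℕ)

def chirp (r : ℕ) : M := ρ ^ (n * r.choose 2)

theorem chirp_add (r s : ℕ) :
    chirp ρ n (r + s) = chirp ρ n r * chirp ρ n s * ρ ^ (n * (r * s)) := by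
  simp only [chirp, Nat.add_choose_two, mul_add, pow_add]

variable {ρ n}

theorem chirp_mul_pow {k : ℕ} (hk : ρ ^ (n * k) = 1) (q : ℕ) :
    chirp ρ n (k * q) = chirp ρ n k ^ q := by
  induction q with
  | zero => simp [chirp]
  | succ q ih =>
    rw [mul_add_one, chirp_add, ih, pow_succ, show n * (k * q * k) = n * k * (q * k) by ring,
      pow_mul, hk, one_pow, mul_one]

theorem chirp_periodic {m : ℕ} (hρ : ρ ^ m = 1) (hm : m ∣ n * m.choose 2) :
    Periodic (chirp ρ n) m := by
  obtain ⟨t, ht⟩ := hm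
  intro r
  rw [chirp_add, show chirp ρ n m = 1 by rw [chirp, ht, pow_mul, hρ, one_pow],
    show n * (r * m) = m * (n * r) by ring, pow_mul, hρ, one_pow, mul_one, mul_one]

end Chirp

noncomputable def chirpSum (ρ : ℂ) (n m : ℕ) (θ : ℂ) : ℂ := ∑ r ∈ range m, chirp ρ n r * θ ^ r

section ChirpSum

variable {m n m' : ℕ} {ρ θ ζ : ℂ}

theorem chirpSum_mul_conj (hmn : m = n * m') (hρ : IsPrimitiveRoot ρ m)
    (hper : m ∣ n * m.choose 2) (hθ : θ ^ m = 1) :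
    chirpSum ρ n m θ * conj (chirpSum ρ n m θ) =
      m * ∑ q ∈ range n, (chirp ρ n m' * θ ^ m') ^ q := by
  rcases eq_or_ne m 0 with rfl | hm
  · simp [chirpSum]
  set F : ℕ → ℂ := fun r => chirp ρ n r * θ ^ r with hF
  have hFper : Periodic F m := by
    intro r
    simp only [hF, chirp_periodic hρ.pow_eq_one hper r, pow_add, hθ, mul_one]
  have hFnorm : ∀ s, ‖F s‖ = 1 := by
    intro s
    simp [hF, chirp, norm_pow, hρ.norm'_eq_one hm, norm_eq_one_of_pow_eq_one hθ hm]
  have hFadd : ∀ s t, F (t + s) = F t * F s * (ρ ^ (n * t)) ^ s := by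
    intro s t
    simp only [hF, chirp_add, pow_add, ← pow_mul]
    ring
  have hcorr : ∀ s t, conj (F s) * F (t + s) = F t * (ρ ^ (n * t)) ^ s := by
    intro s t
    have hF0 : F s ≠ 0 := norm_ne_zero_iff.mp (by rw [hFnorm]; exact one_ne_zero)
    rw [← inv_eq_conj (hFnorm s), hFadd]
    field_simp
  calc chirpSum ρ n m θ * conj (chirpSum ρ n m θ)
      = ∑ s ∈ range m, conj (F s) * ∑ t ∈ range m, F (t + s) := by
        change (∑ r ∈ range m, F r) * conj (∑ r ∈ range m, F r) = _
        rw [map_sum, mul_comm, sum_mul]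
        simp only [hFper.sum_range_add]
    _ = ∑ t ∈ range m, F t * ∑ s ∈ range m, (ρ ^ (n * t)) ^ s := by
        simp only [mul_sum, hcorr]
        exact sum_comm
    _ = ∑ q ∈ range n, F (m' * q) * m := by
        simp only [pow_mul ρ n, hρ.geom_sum_pow_pow_eq_ite hmn, mul_ite, mul_zero]
        rw [show range m = range (m' * n) by rw [hmn, mul_comm]]
        exact sum_range_mul_ite_dvd (Nat.pos_of_ne_zero (by rintro rfl; simp [hmn] at hm)) _ _
    _ = m * ∑ q ∈ range n, (chirp ρ n m' * θ ^ m') ^ q := by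
        rw [mul_sum]
        refine sum_congr rfl fun q _ => ?_
        simp only [hF]
        rw [chirp_mul_pow (by rw [← hmn]; exact hρ.pow_eq_one), pow_mul, mul_pow, mul_comm]

theorem chirp_mul_pow_pow_eq_one (hmn : m = n * m') (hρ : ρ ^ m = 1)
    (hcase : Even n ∨ Odd m) (hθ : θ ^ m = 1) : (chirp ρ n m' * θ ^ m') ^ n = 1 := by
  obtain ⟨t, ht⟩ := dvd_mul_choose_two (hcase.imp_right fun h => (Nat.odd_mul.1 (hmn ▸ h)).2)
  rw [mul_pow, chirp, ← pow_mul, ← pow_mul, show n * m'.choose 2 * n = m * t by rw [ht, hmn]; ring,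
    show m' * n = m by rw [hmn, mul_comm], pow_mul, hρ, hθ, one_pow, one_mul]

theorem norm_chirpSum_sq (hmn : m = n * m') (hρ : IsPrimitiveRoot ρ m)
    (hcase : Even n ∨ Odd m) (hθ : θ ^ m = 1) :
    ‖chirpSum ρ n m θ‖ ^ 2 = if chirp ρ n m' * θ ^ m' = 1 then (m * n : ℝ) else 0 := by
  have h := chirpSum_mul_conj hmn hρ (dvd_mul_choose_two hcase) hθ
  rw [mul_conj', geom_sum_eq_ite_of_pow_eq_one
    (chirp_mul_pow_pow_eq_one hmn hρ.pow_eq_one hcase hθ)] at h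
  split_ifs at h ⊢
  · exact_mod_cast h
  · exact_mod_cast h.trans (mul_zero _)

theorem exists_norm_chirpSum_eq_sqrt [NeZero n] (hmn : m = n * m')
    (hm : 0 < m) (hρ : IsPrimitiveRoot ρ m) (hcase : Even n ∨ Odd m) (hζ : ζ ^ m = 1)
    (τ : Equiv.Perm (Fin n)) :
    ∃ h₀ : Fin n, ‖chirpSum ρ n m (ζ * ρ ^ (τ h₀).val)‖ = √(m * n) ∧
      ∀ h ≠ h₀, chirpSum ρ n m (ζ * ρ ^ (τ h).val) = 0 := by
  have hθ : ∀ h : Fin n, (ζ * ρ ^ (τ h).val) ^ m = 1 := fun h => by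
    rw [mul_pow, hζ, one_mul, ← pow_mul, mul_comm (τ h).val m, pow_mul, hρ.pow_eq_one, one_pow]
  have hη : IsPrimitiveRoot (ρ ^ m') n := hρ.pow hm (hmn.trans (mul_comm _ _))
  obtain ⟨i₀, hi₀, hi₀_unique⟩ := hη.existsUnique_mul_pow_eq_one
    (chirp_mul_pow_pow_eq_one hmn hρ.pow_eq_one hcase hζ)
  have hw : ∀ h : Fin n, chirp ρ n m' * (ζ * ρ ^ (τ h).val) ^ m' = 1 ↔ h = τ.symm i₀ := fun h => by
    rw [Equiv.eq_symm_apply, mul_pow ζ, ← pow_mul ρ, mul_comm (τ h).val, pow_mul ρ, ← mul_assoc]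
    exact ⟨hi₀_unique (τ h), fun h => h ▸ hi₀⟩
  refine ⟨τ.symm i₀, ?_, fun h hh => ?_⟩
  · have hnorm := norm_chirpSum_sq hmn hρ hcase (hθ (τ.symm i₀))
    rw [if_pos ((hw _).2 rfl)] at hnorm
    rw [← hnorm, Real.sqrt_sq (norm_nonneg _)]
  · have hnorm := norm_chirpSum_sq hmn hρ hcase (hθ h)
    rw [if_neg (mt (hw h).1 hh)] at hnorm
    exact norm_eq_zero.1 ((pow_eq_zero_iff two_ne_zero).1 hnorm)

end ChirpSum

theorem dft1_eq_sum_chirpSum {N n m : ℕ} [NeZero N] (hN : N = n * m) (hn : 0 < n)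
    (c : Fin n → ℂ) (σ : Fin n → ℕ) (ρ : ℂ) (f : ZMod N → ℂ)
    (hf : ∀ k : ZMod N, f k = c ⟨k.val % n, Nat.mod_lt _ hn⟩ *
      ρ ^ (k.val / n * σ ⟨k.val % n, Nat.mod_lt _ hn⟩ + n * (k.val / n * (k.val / n - 1) / 2)))
    (c' : ZMod N) :
    dft1 N f c' = (1 / Real.sqrt N : ℂ) * ∑ h : Fin n,
      c h * exp (2 * Real.pi * I * (h * c'.val) / N) *
        chirpSum ρ n m (exp (2 * Real.pi * I / m) ^ c'.val * ρ ^ σ h) := by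
  have hm : (m : ℂ) ≠ 0 := by
    have := NeZero.ne N
    rw [hN] at this
    exact_mod_cast right_ne_zero_of_mul this
  have hexp : ∀ (h : Fin n) (r : ℕ), exp (2 * Real.pi * I * ((n * r + h : ℕ) * c'.val) / N) =
      exp (2 * Real.pi * I * (h * c'.val) / N) * (exp (2 * Real.pi * I / m) ^ c'.val) ^ r := by
    intro h r
    have hNc : (N : ℂ) = n * m := by exact_mod_cast hN
    have hn' : (n : ℂ) ≠ 0 := by exact_mod_cast hn.ne'
    rw [← pow_mul, ← exp_nat_mul, ← exp_add, hNc]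
    congr 1
    push_cast
    field_simp
    ring
  set Φ : Fin n → ℕ → ℂ := fun h r => exp (2 * Real.pi * I * ((n * r + h : ℕ) * c'.val) / N) *
    (c h * ρ ^ (r * σ h + n * (r * (r - 1) / 2)))
  have hΦ : ∀ k : ZMod N, exp (2 * Real.pi * I * (k.val * c'.val) / N) * f k =
      Φ ⟨k.val % n, Nat.mod_lt _ hn⟩ (k.val / n) := by
    intro k
    simp only [Φ, Nat.div_add_mod, hf]
  simp only [dft1, hΦ, ZMod.sum_divMod_eq_sum_sum hN hn Φ]
  refine congrArg _ (sum_congr rfl fun h _ => ?_)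
  rw [chirpSum, mul_sum]
  refine sum_congr rfl fun r _ => ?_
  simp only [Φ]
  rw [hexp, pow_add, chirp, Nat.choose_two_right, pow_mul]
  ring

/-- Björck–Saffari, Case 1: if `n > 1` with `n²` the largest square dividing `N`,
`m = N/n`, and `n` is even or `m` is odd, then for any unimodular sequence `c`, any
permutation `τ` of `Fin n`, and any primitive `m`-th root of unity `ρ`, the function
`f(nr + h) = c_h · ρ^(r·τ(h) + n·r(r-1)/2)` is biunimodular. -/
theorem stmt_17 (N n : ℕ) [NeZero N] (hn : 1 < n)
    (hsq : n ^ 2 ∣ N)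
    (m : ℕ) (hm : m = N / n) (hcase : Even n ∨ Odd m)
    (c : Fin n → ℂ) (hc : ∀ h : Fin n, ‖c h‖ = 1)
    (τ : Equiv.Perm (Fin n)) (ρ : ℂ) (hρ : IsPrimitiveRoot ρ m)
    (f : ZMod N → ℂ)
    (hf : ∀ k : ZMod N,
      f k = c ⟨k.val % n, Nat.mod_lt _ (by omega)⟩ *
        ρ ^ ((k.val / n) * (τ ⟨k.val % n, Nat.mod_lt _ (by omega)⟩).val +
             n * (k.val / n * (k.val / n - 1) / 2))) :
    (∀ k : ZMod N, ‖f k‖ = 1) ∧ (∀ c' : ZMod N, ‖dft1 N f c'‖ = 1) := by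
  obtain ⟨m', hN'⟩ := hsq
  have hmn : m = n * m' := by rw [hm, hN', sq, mul_assoc, Nat.mul_div_cancel_left _ (by omega)]
  have hN : N = n * m := by rw [hmn, hN', sq, mul_assoc]
  have hm0 : m ≠ 0 := by rintro rfl; exact NeZero.ne N (by rw [hN, mul_zero])
  have : NeZero n := ⟨by omega⟩
  refine ⟨fun k => ?_, fun c' => ?_⟩
  · rw [hf, norm_mul, hc, norm_pow, hρ.norm'_eq_one hm0, one_pow, one_mul]
  have hζ : (exp (2 * Real.pi * I / m) ^ c'.val) ^ m = 1 := by
    rw [← pow_mul, mul_comm c'.val m, pow_mul, (isPrimitiveRoot_exp m hm0).pow_eq_one, one_pow]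
  obtain ⟨h₀, hG₀, hG⟩ :=
    exists_norm_chirpSum_eq_sqrt hmn (Nat.pos_of_ne_zero hm0) hρ hcase hζ τ
  have hsqrt : 0 < √(N : ℝ) := Real.sqrt_pos.2 (Nat.cast_pos.2 (NeZero.pos N))
  rw [dft1_eq_sum_chirpSum hN (by omega) c (fun h => (τ h).val) ρ f hf c',
    Fintype.sum_eq_single h₀ (fun h hh => by rw [hG h hh, mul_zero]), norm_mul, norm_mul, norm_mul,
    hc, hG₀, norm_exp_two_pi_I_mul_natCast_div, ← Nat.cast_mul, mul_comm m n, ← hN, one_mul,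
    one_mul, norm_div, norm_one, norm_real, Real.norm_of_nonneg hsqrt.le,
    one_div_mul_cancel hsqrt.ne']
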